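/- arXiv:2210.05352 — 2 statements merged into one kernel-verified Lean document; each statement's English description precedes it below -/
import Mathlib

section
/- For any U ∈ ℋ (square-summable sequence on the half-space grid satisfying the extrapolation condition), there holds ‖D₁,₀ U‖²_{ℓ²(𝓘)} = ‖D₁₊ U‖²_{ℓ²(𝓘)} − (1/4)‖Δ₁ U‖²_{ℓ²(𝓘)}. -/
noncomputable section

/-- Forward difference in the first variable. -/
def D1p (u : ℤ → ℤ → ℝ) : ℤ → ℤ → ℝ := fun j k => u (j + 1) k - u j k
/-- Backward difference in the first variable. -/
def D1m (u : ℤ → ℤ → ℝ) : ℤ → ℤ → ℝ := fun j k => u j k - u (j - 1) k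
/-- Forward difference in the second variable. -/
def D2p (u : ℤ → ℤ → ℝ) : ℤ → ℤ → ℝ := fun j k => u j (k + 1) - u j k
/-- Backward difference in the second variable. -/
def D2m (u : ℤ → ℤ → ℝ) : ℤ → ℤ → ℝ := fun j k => u j k - u j (k - 1)
/-- Centered difference in the first variable. -/
def D10 (u : ℤ → ℤ → ℝ) : ℤ → ℤ → ℝ := fun j k => (D1p u j k + D1m u j k) / 2
/-- Centered difference in the second variable. -/
def D20 (u : ℤ → ℤ → ℝ) : ℤ → ℤ → ℝ := fun j k => (D2p u j k + D2m u j k) / 2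
/-- Discrete Laplacian in the first variable. -/
def L1 (u : ℤ → ℤ → ℝ) : ℤ → ℤ → ℝ := D1p (D1m u)
/-- Discrete Laplacian in the second variable. -/
def L2 (u : ℤ → ℤ → ℝ) : ℤ → ℤ → ℝ := D2p (D2m u)

/-- Squared ℓ²(ℤ²) norm. -/
def sqZ (u : ℤ → ℤ → ℝ) : ℝ := ∑' p : ℤ × ℤ, (u p.1 p.2) ^ 2
/-- ℓ²(ℤ²) scalar product. -/
def ipZ (u v : ℤ → ℤ → ℝ) : ℝ := ∑' p : ℤ × ℤ, u p.1 p.2 * v p.1 p.2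

/-- Squared ℓ²(𝓘) norm over the interior indices 𝓘 = ℕ × ℤ of the half-space grid. -/
def sqH (u : ℤ → ℤ → ℝ) : ℝ := ∑' p : ℕ × ℤ, (u (p.1 : ℤ) p.2) ^ 2
/-- ℓ²(𝓘) scalar product over the interior indices 𝓘 = ℕ × ℤ. -/
def ipH (u v : ℤ → ℤ → ℝ) : ℝ := ∑' p : ℕ × ℤ, u (p.1 : ℤ) p.2 * v (p.1 : ℤ) p.2
/-- Membership in ℋ : square-summable on the half-space grid and satisfying the
extrapolation (Neumann) boundary condition `u (-1) k = u 0 k`. -/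
def memH (u : ℤ → ℤ → ℝ) : Prop :=
  (∀ k : ℤ, u (-1) k = u 0 k) ∧ Summable (fun p : ℕ × ℤ => (u (p.1 : ℤ) p.2) ^ 2)

/-- Squared ℓ²(𝔦) norm over the interior indices 𝔦 = ℕ × ℕ of the quarter-space grid. -/
def sqQ (u : ℤ → ℤ → ℝ) : ℝ := ∑' p : ℕ × ℕ, (u (p.1 : ℤ) (p.2 : ℤ)) ^ 2
/-- ℓ²(𝔦) scalar product over the interior indices 𝔦 = ℕ × ℕ. -/
def ipQ (u v : ℤ → ℤ → ℝ) : ℝ :=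
  ∑' p : ℕ × ℕ, u (p.1 : ℤ) (p.2 : ℤ) * v (p.1 : ℤ) (p.2 : ℤ)
/-- Membership in 𝔥 : square-summable on the quarter-space grid, satisfying the
extrapolation boundary conditions on both sides and the corner condition. -/
def memQ (u : ℤ → ℤ → ℝ) : Prop :=
  (∀ k : ℤ, -1 ≤ k → u (-1) k = u 0 k) ∧ (∀ j : ℤ, 0 ≤ j → u j (-1) = u j 0) ∧
    Summable (fun p : ℕ × ℕ => (u (p.1 : ℤ) (p.2 : ℤ)) ^ 2)

/-- The skew-selfadjoint part `v` in the decomposition of the Lax-Wendroff scheme. -/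
def vop (α β : ℝ) (u : ℤ → ℤ → ℝ) : ℤ → ℤ → ℝ :=
  fun j k => -α * D10 u j k - β * D20 u j k
/-- The selfadjoint part `w` in the decomposition of the Lax-Wendroff scheme. -/
def wop (α β : ℝ) (u : ℤ → ℤ → ℝ) : ℤ → ℤ → ℝ :=
  fun j k => -(α ^ 2 / 2) * L1 u j k - (β ^ 2 / 2) * L2 u j k
    - α * β * D10 (D20 u) j k + ((α ^ 2 + β ^ 2) / 8) * L1 (L2 u) j k


/-!
Pointwise `D₁,₀ u = (D₁₊ u + D₁₋ u)/2` and `Δ₁ u = D₁₊ u − D₁₋ u`, so the parallelogram law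
gives `|D₁,₀ u|² = (|D₁₊ u|² + |D₁₋ u|²)/2 − |Δ₁ u|²/4`. Since `(D₁₋ u)_{j+1,k} = (D₁₊ u)_{j,k}`
and the extrapolation condition makes `D₁₋ u` vanish on the boundary row `j = 0`, the sums of
`|D₁₋ u|²` and `|D₁₊ u|²` over `ℕ × ℤ` coincide.
-/

open Function

lemma injective_succ_fst {β : Type*} : Injective fun p : ℕ × β => (p.1 + 1, p.2) :=
  (add_left_injective 1).prodMap injective_id

lemma eq_zero_off_range_succ_fst {α β : Type*} [Zero α] {f : ℕ × β → α}
    (hf : ∀ b, f (0, b) = 0) : ∀ p ∉ Set.range fun p : ℕ × β => (p.1 + 1, p.2), f p = 0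
  | (0, b), _ => hf b
  | (j + 1, b), hp => absurd ⟨(j, b), rfl⟩ hp

section ShiftFirst

variable {α β : Type*} [AddCommMonoid α] [TopologicalSpace α] {f : ℕ × β → α}

lemma summable_comp_succ_fst_iff (hf : ∀ b, f (0, b) = 0) :
    Summable (fun p : ℕ × β => f (p.1 + 1, p.2)) ↔ Summable f :=
  injective_succ_fst.summable_iff (eq_zero_off_range_succ_fst hf)

lemma tsum_comp_succ_fst (hf : ∀ b, f (0, b) = 0) :
    ∑' p : ℕ × β, f (p.1 + 1, p.2) = ∑' p, f p :=
  injective_succ_fst.tsum_eq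
    (support_subset_iff'.mpr (eq_zero_off_range_succ_fst hf))

end ShiftFirst

lemma summable_sq_sub {ι : Type*} {f g : ι → ℝ} (hf : Summable fun i => f i ^ 2)
    (hg : Summable fun i => g i ^ 2) : Summable fun i => (f i - g i) ^ 2 :=
  Summable.of_nonneg_of_le (fun _ => sq_nonneg _)
    (fun i => by nlinarith [sq_nonneg (f i + g i)]) ((hf.add hg).mul_left 2)

section Differences

variable (u : ℤ → ℤ → ℝ)

lemma D1m_add_one (j k : ℤ) : D1m u (j + 1) k = D1p u j k := by
  simp only [D1m, D1p, add_sub_cancel_right]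

lemma L1_eq_D1p_sub_D1m (j k : ℤ) : L1 u j k = D1p u j k - D1m u j k := by
  rw [L1, D1p, D1m_add_one]

lemma D10_sq (j k : ℤ) :
    D10 u j k ^ 2 = (D1p u j k ^ 2 + D1m u j k ^ 2) / 2 - L1 u j k ^ 2 / 4 := by
  rw [D10, L1_eq_D1p_sub_D1m]
  ring

end Differences

section HalfSpace

variable {u : ℤ → ℤ → ℝ}

lemma D1m_zero_of_extrapolation (hbc : ∀ k, u (-1) k = u 0 k) (k : ℤ) : D1m u 0 k = 0 := by
  simp [D1m, hbc]

lemma summable_sq_D1p (hu : Summable fun p : ℕ × ℤ => u p.1 p.2 ^ 2) :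
    Summable fun p : ℕ × ℤ => D1p u p.1 p.2 ^ 2 := by
  have hshift := hu.comp_injective (injective_succ_fst (β := ℤ))
  simp only [comp_def, Nat.cast_add, Nat.cast_one] at hshift
  exact summable_sq_sub hshift hu

lemma summable_sq_D1m (hu : memH u) : Summable fun p : ℕ × ℤ => D1m u p.1 p.2 ^ 2 := by
  refine (summable_comp_succ_fst_iff (f := fun p : ℕ × ℤ => D1m u p.1 p.2 ^ 2)
    (by simp [D1m_zero_of_extrapolation hu.1])).mp ?_
  simpa only [Nat.cast_add, Nat.cast_one, D1m_add_one] using summable_sq_D1p hu.2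

lemma sqH_D1m (hbc : ∀ k, u (-1) k = u 0 k) : sqH (D1m u) = sqH (D1p u) := by
  rw [sqH, ← tsum_comp_succ_fst (f := fun p : ℕ × ℤ => D1m u p.1 p.2 ^ 2)
    (by simp [D1m_zero_of_extrapolation hbc])]
  simp only [Nat.cast_add, Nat.cast_one, D1m_add_one, sqH]

lemma summable_sq_L1 (hu : memH u) : Summable fun p : ℕ × ℤ => L1 u p.1 p.2 ^ 2 := by
  simpa only [L1_eq_D1p_sub_D1m] using summable_sq_sub (summable_sq_D1p hu.2) (summable_sq_D1m hu)

end HalfSpace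

/-- Lemma 5 (iv): `‖D₁,₀ U‖²_{ℓ²(𝓘)} = ‖D₁₊ U‖²_{ℓ²(𝓘)} − (1/4)‖Δ₁ U‖²_{ℓ²(𝓘)}` for `U ∈ ℋ`. -/
theorem halfspace_d10_norm (U : ℤ → ℤ → ℝ) (hU : memH U) :
    sqH (D10 U) = sqH (D1p U) - (1 / 4) * sqH (L1 U) := by
  have hp := summable_sq_D1p hU.2
  have hm := summable_sq_D1m hU
  have hL := summable_sq_L1 hU
  calc sqH (D10 U)
      = (sqH (D1p U) + sqH (D1m U)) / 2 - sqH (L1 U) / 4 := by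
        simp only [sqH, D10_sq]
        rw [(hp.add hm).div_const 2 |>.tsum_sub (hL.div_const 4), tsum_div_const,
          tsum_div_const, hp.tsum_add hm]
    _ = sqH (D1p U) - (1 / 4) * sqH (L1 U) := by
        rw [sqH_D1m hU.1]
        ring
end
end

section
/- Let α, β be real numbers, let u ∈ ℋ, and define on the interior indices 𝓘: v := −α D₁,₀ u − β D₂,₀ u and w := −(α²/2) Δ₁ u − (β²/2) Δ₂ u − αβ D₁,₀ D₂,₀ u + ((α²+β²)/8) Δ₁ Δ₂ u. Then ‖v‖²_{ℓ²(𝓘)} − 2⟨u ; w⟩_{ℓ²(𝓘)} = −(α²/4)‖Δ₁ u‖²_{ℓ²(𝓘)} − (β²/4)‖Δ₂ u‖²_{ℓ²(𝓘)} − ((α²+β²)/4)‖D₁₊ D₂₊ u‖²_{ℓ²(𝓘)}. -/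
noncomputable section

/-!
Everything is summation by parts. In the direction `k ∈ ℤ` it is exact: `D20` is skew,
`⟨f, L2 g⟩ = -⟨D2p f, D2p g⟩` and `‖D2m g‖ = ‖D2p g‖`. In the direction `j ∈ ℕ` the boundary
condition `u (-1) = u 0` makes the boundary term vanish, so again `⟨f, L1 g⟩ = -⟨D1p f, D1p g⟩`
and `‖D1m g‖ = ‖D1p g‖`. The parallelogram identity for `D1p u` and `D1m u` (whose half-sum is
`D10 u` and difference `L1 u`) then gives `‖D10 u‖² = ‖D1p u‖² - ‖L1 u‖² / 4`, and likewise in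
`k`; the `αβ` cross terms cancel by skewness of `D20`, and since `L2 u` again satisfies the
boundary condition, `⟨u, L1 L2 u⟩ = ‖D1p D2p u‖²`.
-/

def SqSummableH (f : ℤ → ℤ → ℝ) : Prop := Summable fun p : ℕ × ℤ => f p.1 p.2 ^ 2

theorem Summable.mul_of_summable_sq {ι : Type*} {f g : ι → ℝ}
    (hf : Summable fun i => f i ^ 2) (hg : Summable fun i => g i ^ 2) :
    Summable fun i => f i * g i :=
  Summable.of_norm_bounded ((hf.add hg).div_const 2) fun i => by
    rw [Real.norm_eq_abs, abs_mul]
    nlinarith [two_mul_le_add_sq |f i| |g i|, sq_abs (f i), sq_abs (g i)]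

theorem succ_fst_injective : Function.Injective fun p : ℕ × ℤ => (p.1 + 1, p.2) :=
  (add_left_injective 1).prodMap Function.injective_id

theorem tsum_comp_add_snd (F : ℕ → ℤ → ℝ) (m : ℤ) :
    ∑' p : ℕ × ℤ, F p.1 (p.2 + m) = ∑' p : ℕ × ℤ, F p.1 p.2 :=
  ((Equiv.refl ℕ).prodCongr (Equiv.addRight m)).tsum_eq fun p => F p.1 p.2

theorem ipH_comm (f g : ℤ → ℤ → ℝ) : ipH f g = ipH g f :=
  tsum_congr fun _ => mul_comm _ _

theorem ipH_self (f : ℤ → ℤ → ℝ) : ipH f f = sqH f :=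
  tsum_congr fun _ => (sq _).symm

theorem ipH_comp_add_snd (f g : ℤ → ℤ → ℝ) (m : ℤ) :
    ipH (fun j k => f j (k + m)) (fun j k => g j (k + m)) = ipH f g :=
  tsum_comp_add_snd (fun j k => f j k * g j k) m

theorem ipH_D2m_D2m (f g : ℤ → ℤ → ℝ) : ipH (D2m f) (D2m g) = ipH (D2p f) (D2p g) := by
  rw [← ipH_comp_add_snd _ _ 1]
  simp only [D2m, add_sub_cancel_right]
  rfl

/-- The boundary condition kills the row `j = 0` of `D1m g`; what remains is a shift in `j`. -/
theorem ipH_D1m_of_bc (f : ℤ → ℤ → ℝ) {g : ℤ → ℤ → ℝ} (hg : ∀ k, g (-1) k = g 0 k) :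
    ipH f (D1m g) = ipH (fun j k => f (j + 1) k) (D1p g) := by
  have hsupp : (Function.support fun p : ℕ × ℤ => f p.1 p.2 * D1m g p.1 p.2) ⊆
      Set.range fun p : ℕ × ℤ => (p.1 + 1, p.2) := by
    rintro ⟨_ | j, k⟩ hp
    · simp [D1m, hg] at hp
    · exact ⟨(j, k), rfl⟩
  rw [ipH, ipH, ← succ_fst_injective.tsum_eq hsupp]
  simp only [D1m, D1p, Nat.cast_add, Nat.cast_one, add_sub_cancel_right]

theorem sqH_D1m_of_bc {g : ℤ → ℤ → ℝ} (hg : ∀ k, g (-1) k = g 0 k) :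
    sqH (D1m g) = sqH (D1p g) := by
  rw [← ipH_self, ← ipH_self, ipH_D1m_of_bc _ hg]
  simp only [D1m, add_sub_cancel_right]
  rfl

theorem sqH_D2m (g : ℤ → ℤ → ℝ) : sqH (D2m g) = sqH (D2p g) := by
  rw [← ipH_self, ← ipH_self, ipH_D2m_D2m]

namespace SqSummableH

variable {f g : ℤ → ℤ → ℝ}

theorem summable_mul (hf : SqSummableH f) (hg : SqSummableH g) :
    Summable fun p : ℕ × ℤ => f p.1 p.2 * g p.1 p.2 :=
  hf.mul_of_summable_sq hg

theorem add (hf : SqSummableH f) (hg : SqSummableH g) : SqSummableH (f + g) :=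
  ((Summable.add hf hg).mul_left 2).of_nonneg_of_le (fun _ => sq_nonneg _) fun p => by
    simp only [Pi.add_apply]
    nlinarith [sq_nonneg (f p.1 p.2 - g p.1 p.2)]

theorem neg (hf : SqSummableH f) : SqSummableH (-f) := by
  simpa [SqSummableH] using hf

theorem sub (hf : SqSummableH f) (hg : SqSummableH g) : SqSummableH (f - g) := by
  simpa only [sub_eq_add_neg] using hf.add hg.neg

theorem div_const (hf : SqSummableH f) (c : ℝ) : SqSummableH fun j k => f j k / c := by
  show Summable fun p : ℕ × ℤ => (f p.1 p.2 / c) ^ 2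
  simp_rw [div_pow]
  exact Summable.div_const hf _

theorem comp_add_snd (hf : SqSummableH f) (m : ℤ) : SqSummableH fun j k => f j (k + m) :=
  ((Equiv.refl ℕ).prodCongr (Equiv.addRight m)).summable_iff.mpr hf

theorem comp_succ_fst (hf : SqSummableH f) : SqSummableH fun j k => f (j + 1) k := by
  refine (hf.comp_injective succ_fst_injective).congr fun p => ?_
  simp

theorem D1p (hf : SqSummableH f) : SqSummableH (D1p f) :=
  hf.comp_succ_fst.sub hf

theorem D2p (hf : SqSummableH f) : SqSummableH (D2p f) :=
  (hf.comp_add_snd 1).sub hf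

theorem D2m (hf : SqSummableH f) : SqSummableH (D2m f) :=
  hf.sub (hf.comp_add_snd (-1))

theorem D20 (hf : SqSummableH f) : SqSummableH (D20 f) :=
  (hf.D2p.add hf.D2m).div_const 2

theorem L2 (hf : SqSummableH f) : SqSummableH (L2 f) :=
  hf.D2m.D2p

end SqSummableH

namespace memH

variable {u : ℤ → ℤ → ℝ}

theorem sqSummableH (hu : memH u) : SqSummableH u := hu.2

theorem sqSummableH_comp_pred_fst (hu : memH u) : SqSummableH fun j k => u (j - 1) k := by
  obtain ⟨hbc, hs⟩ := hu
  have hrows := (summable_prod_of_nonneg fun _ => sq_nonneg _).mp hs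
  refine (summable_prod_of_nonneg fun _ => sq_nonneg _).mpr ⟨?_, ?_⟩
  · rintro (_ | j)
    · simpa [hbc] using hrows.1 0
    · simpa using hrows.1 j
  · refine (summable_nat_add_iff 1).mp ?_
    simpa using hrows.2

theorem sqSummableH_D1m (hu : memH u) : SqSummableH (D1m u) :=
  hu.sqSummableH.sub hu.sqSummableH_comp_pred_fst

theorem sqSummableH_D10 (hu : memH u) : SqSummableH (D10 u) :=
  (hu.sqSummableH.D1p.add hu.sqSummableH_D1m).div_const 2

theorem sqSummableH_L1 (hu : memH u) : SqSummableH (L1 u) :=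
  hu.sqSummableH_D1m.D1p

theorem D20 (hu : memH u) : memH (D20 u) :=
  ⟨fun k => by simp only [_root_.D20, _root_.D2p, _root_.D2m, hu.1], hu.sqSummableH.D20⟩

theorem L2 (hu : memH u) : memH (L2 u) :=
  ⟨fun k => by simp only [_root_.L2, _root_.D2p, _root_.D2m, hu.1], hu.sqSummableH.L2⟩

end memH

section Identities

variable {f g a b u : ℤ → ℤ → ℝ}

theorem D1p_eq_sub (g : ℤ → ℤ → ℝ) : D1p g = (fun j k => g (j + 1) k) - g := rfl

theorem D2p_eq_sub (g : ℤ → ℤ → ℝ) : D2p g = (fun j k => g j (k + 1)) - g := rfl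

theorem D2m_eq_sub (g : ℤ → ℤ → ℝ) : D2m g = g - fun j k => g j (k + -1) := rfl

theorem L1_eq_sub (g : ℤ → ℤ → ℝ) : L1 g = D1p g - D1m g := by
  funext j k
  simp only [L1, D1p, D1m, Pi.sub_apply, add_sub_cancel_right]

theorem L2_eq_sub (g : ℤ → ℤ → ℝ) : L2 g = D2p g - D2m g := by
  funext j k
  simp only [L2, D2p, D2m, Pi.sub_apply, add_sub_cancel_right]

theorem D10_D20_comm (u : ℤ → ℤ → ℝ) : D10 (D20 u) = D20 (D10 u) := by
  funext j k
  simp only [D10, D20, D1p, D1m, D2p, D2m]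
  ring

theorem D1p_L2_comm (u : ℤ → ℤ → ℝ) : D1p (L2 u) = L2 (D1p u) := by
  funext j k
  simp only [D1p, L2, D2p, D2m]
  ring

theorem D2p_D1p_comm (u : ℤ → ℤ → ℝ) : D2p (D1p u) = D1p (D2p u) := by
  funext j k
  simp only [D1p, D2p]
  ring

theorem ipH_sub_right (hf : SqSummableH f) (ha : SqSummableH a) (hb : SqSummableH b) :
    ipH f (a - b) = ipH f a - ipH f b := by
  simp only [ipH, Pi.sub_apply, mul_sub]
  exact (hf.summable_mul ha).tsum_sub (hf.summable_mul hb)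

theorem ipH_sub_left (ha : SqSummableH a) (hb : SqSummableH b) (hg : SqSummableH g) :
    ipH (a - b) g = ipH a g - ipH b g := by
  rw [ipH_comm, ipH_sub_right hg ha hb, ipH_comm g, ipH_comm g]

theorem ipH_midpoint_right (hf : SqSummableH f) (ha : SqSummableH a) (hb : SqSummableH b) :
    ipH f (fun j k => (a j k + b j k) / 2) = (ipH f a + ipH f b) / 2 := by
  refine (tsum_congr fun p => ?_).trans
    (((hf.summable_mul ha).hasSum.add (hf.summable_mul hb).hasSum).div_const 2).tsum_eq
  ring

theorem ipH_midpoint_left (ha : SqSummableH a) (hb : SqSummableH b) (hg : SqSummableH g) :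
    ipH (fun j k => (a j k + b j k) / 2) g = (ipH a g + ipH b g) / 2 := by
  rw [ipH_comm, ipH_midpoint_right hg ha hb, ipH_comm g, ipH_comm g]

theorem sqH_midpoint_add_sqH_sub (ha : SqSummableH a) (hb : SqSummableH b) :
    sqH (fun j k => (a j k + b j k) / 2) + sqH (a - b) / 4 = (sqH a + sqH b) / 2 := by
  refine (((ha.add hb).div_const 2).hasSum.add ((ha.sub hb).hasSum.div_const 4)).tsum_eq.symm.trans
    ((tsum_congr fun p => ?_).trans ((ha.hasSum.add hb.hasSum).div_const 2).tsum_eq)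
  simp only [Pi.add_apply, Pi.sub_apply]
  ring

theorem ipH_D2p (hf : SqSummableH f) (hg : SqSummableH g) : ipH f (D2p g) = -ipH (D2m f) g := by
  have hshift : ipH f (fun j k => g j (k + 1)) = ipH (fun j k => f j (k + -1)) g := by
    rw [← ipH_comp_add_snd _ _ (-1)]
    simp only [neg_add_cancel_right]
  rw [D2p_eq_sub, D2m_eq_sub, ipH_sub_right hf (hg.comp_add_snd 1) hg,
    ipH_sub_left hf (hf.comp_add_snd (-1)) hg, hshift]
  ring

theorem ipH_D2m (hf : SqSummableH f) (hg : SqSummableH g) : ipH f (D2m g) = -ipH (D2p f) g := by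
  rw [ipH_comm, ipH_comm (D2p f), ipH_D2p hg hf, neg_neg]

theorem ipH_D20 (hf : SqSummableH f) (hg : SqSummableH g) : ipH f (D20 g) = -ipH (D20 f) g := by
  unfold D20
  rw [ipH_midpoint_right hf hg.D2p hg.D2m, ipH_midpoint_left hf.D2p hf.D2m hg,
    ipH_D2p hf hg, ipH_D2m hf hg]
  ring

theorem ipH_L2 (hf : SqSummableH f) (hg : SqSummableH g) :
    ipH f (L2 g) = -ipH (D2p f) (D2p g) := by
  unfold L2
  rw [ipH_D2p hf hg.D2m, ipH_D2m_D2m]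

theorem ipH_L1 (hf : SqSummableH f) (hg : memH g) : ipH f (L1 g) = -ipH (D1p f) (D1p g) := by
  rw [L1_eq_sub, ipH_sub_right hf hg.sqSummableH.D1p hg.sqSummableH_D1m, ipH_D1m_of_bc f hg.1,
    D1p_eq_sub f, ipH_sub_left hf.comp_succ_fst hf hg.sqSummableH.D1p]
  ring

theorem sqH_D10 (hg : memH g) : sqH (D10 g) = sqH (D1p g) - sqH (L1 g) / 4 := by
  have h := sqH_midpoint_add_sqH_sub hg.sqSummableH.D1p hg.sqSummableH_D1m
  rw [← L1_eq_sub, sqH_D1m_of_bc hg.1] at h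
  change sqH (D10 g) + _ = _ at h
  linarith

theorem sqH_D20 (hg : SqSummableH g) : sqH (D20 g) = sqH (D2p g) - sqH (L2 g) / 4 := by
  have h := sqH_midpoint_add_sqH_sub hg.D2p hg.D2m
  rw [← L2_eq_sub, sqH_D2m] at h
  change sqH (D20 g) + _ = _ at h
  linarith

theorem ipH_D10_D20 (hu : memH u) : ipH u (D10 (D20 u)) = -ipH (D10 u) (D20 u) := by
  rw [D10_D20_comm, ipH_D20 hu.sqSummableH hu.sqSummableH_D10, ipH_comm]

theorem ipH_L1_L2 (hu : memH u) : ipH u (L1 (L2 u)) = sqH (D1p (D2p u)) := by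
  rw [ipH_L1 hu.sqSummableH hu.L2, D1p_L2_comm, ipH_L2 hu.sqSummableH.D1p hu.sqSummableH.D1p,
    D2p_D1p_comm, ipH_self, neg_neg]

end Identities

section Expansion

variable {u : ℤ → ℤ → ℝ}

theorem sqH_vop (α β : ℝ) (hu : memH u) :
    sqH (vop α β u) =
      α ^ 2 * sqH (D10 u) + 2 * α * β * ipH (D10 u) (D20 u) + β ^ 2 * sqH (D20 u) := by
  have hx := hu.sqSummableH_D10
  have hy := hu.sqSummableH.D20
  refine (tsum_congr fun p => ?_).trans (((hx.hasSum.mul_left (α ^ 2)).add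
    ((hx.summable_mul hy).hasSum.mul_left (2 * α * β))).add (hy.hasSum.mul_left (β ^ 2))).tsum_eq
  simp only [vop]
  ring

theorem ipH_wop (α β : ℝ) (hu : memH u) :
    ipH u (wop α β u) = -(α ^ 2 / 2) * ipH u (L1 u) - (β ^ 2 / 2) * ipH u (L2 u)
      - α * β * ipH u (D10 (D20 u)) + ((α ^ 2 + β ^ 2) / 8) * ipH u (L1 (L2 u)) := by
  have hs := hu.sqSummableH
  refine (tsum_congr fun p => ?_).trans
    (((((hs.summable_mul hu.sqSummableH_L1).hasSum.mul_left (-(α ^ 2 / 2))).sub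
      ((hs.summable_mul hs.L2).hasSum.mul_left (β ^ 2 / 2))).sub
      ((hs.summable_mul hu.D20.sqSummableH_D10).hasSum.mul_left (α * β))).add
      ((hs.summable_mul hu.L2.sqSummableH_L1).hasSum.mul_left ((α ^ 2 + β ^ 2) / 8))).tsum_eq
  simp only [wop]
  ring

end Expansion

/-- Lemma 6: exact identity for the decomposition in the half-space. -/
theorem halfspace_lemma6 (α β : ℝ) (u : ℤ → ℤ → ℝ) (hu : memH u) :
    sqH (vop α β u) - 2 * ipH u (wop α β u) =
      -(α ^ 2 / 4) * sqH (L1 u) - (β ^ 2 / 4) * sqH (L2 u)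
        - ((α ^ 2 + β ^ 2) / 4) * sqH (D1p (D2p u)) := by
  rw [sqH_vop α β hu, ipH_wop α β hu, ipH_L1_L2 hu, ipH_D10_D20 hu, sqH_D10 hu,
    sqH_D20 hu.sqSummableH, ipH_L1 hu.sqSummableH hu, ipH_L2 hu.sqSummableH hu.sqSummableH,
    ipH_self, ipH_self]
  ring
end
end
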